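/- arXiv:2305.06399 — 4 statements merged into one kernel-verified Lean document; each statement's English description precedes it below -/
import Mathlib

section
/- Let H be a complex Hilbert space, Ω ∈ H a unit vector, and ψ the vector state on B(H) given by ψ(X) = ⟨Ω, X Ω⟩. Let I be an index set, and for each ordered pair (a,b) ∈ I × I let α_{ab} be a *-algebra automorphism of B(H) such that α_{ab} ∘ α_{bc} = α_{ac} for all a, b, c ∈ I, and let V_{ab} be a unitary operator such that ψ(α_{ab}⁻¹(X)) = ψ(V_{ab}⁻¹ X V_{ab}) for all X ∈ B(H). Define W_{abc} := V_{ac}⁻¹ α_{ab}(V_{bc}) V_{ab} and h_{abc} := ψ(W_{abc}). Then: (i) W_{abc} is a unitary preserving ψ, i.e. ψ(W_{abc} X W_{abc}*) = ψ(X) for all X; (ii) |h_{abc}| = 1; and (iii) the cocycle identity h_{acd} · h_{abc} = h_{abd} · h_{bcd} holds for all a, b, c, d ∈ I. -/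
/-!
If `W` is unitary and the vector state `ψ = ⟪Ω, · Ω⟫` is invariant under `Ad W`, then testing
against the projection onto `Ω` gives `|ψ W|² = 1`, and equality in Cauchy–Schwarz forces
`W Ω = ψ W • Ω`; hence `ψ (X * W) = ψ W * ψ X` for every `X`. Both `V_{ac}` and
`α_{ab}(V_{bc}) V_{ab}` implement `ψ ∘ α_{ac}⁻¹`, which makes `W_{abc}` unitary and `ψ`-invariant.
The cocycle identity is `ψ` applied to the operator identity
`W_{acd} W_{abc} = W_{abd} (V_{ab}* α_{ab}(W_{bcd}) V_{ab})`, whose last factor is again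
`ψ`-invariant and has `ψ`-value `h_{bcd}`.
-/

namespace StateImplementation

variable {R A S : Type*} [CommSemiring R] [Semiring A] [StarMul A] [Algebra R A]

def Implements (φ : A → S) (β : A ≃⋆ₐ[R] A) (V : A) : Prop :=
  ∀ X, φ (β.symm X) = φ (star V * X * V)

def ConjInvariant (φ : A → S) (W : A) : Prop :=
  ∀ X, φ (W * X * star W) = φ X

variable {φ : A → S} {β γ : A ≃⋆ₐ[R] A} {U V : A}

lemma Implements.apply_star_mul_map_mul (hV : Implements φ β V) (X : A) :
    φ (star V * β X * V) = φ X := by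
  rw [← hV, StarAlgEquiv.symm_apply_apply]

lemma Implements.apply_symm_mul_mul_star (hV : Implements φ β V) (hVu : V ∈ unitary A)
    (X : A) : φ (β.symm (V * X * star V)) = φ X := by
  rw [hV]
  simp only [mul_assoc, Unitary.star_mul_self_of_mem hVu, mul_one]
  rw [← mul_assoc, Unitary.star_mul_self_of_mem hVu, one_mul]

lemma Implements.trans (hU : Implements φ γ U) (hV : Implements φ β V) :
    Implements φ (γ.trans β) (β U * V) := by
  intro X
  have : star U * β.symm X * U = β.symm (star (β U) * X * β U) := by
    simp only [map_mul, ← map_star, StarAlgEquiv.symm_apply_apply]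
  rw [StarAlgEquiv.symm_trans_apply, hU, this, hV]
  simp only [star_mul, mul_assoc]

lemma Implements.conjInvariant_star_mul (hV : Implements φ β V) (hU : Implements φ β U)
    (hUu : U ∈ unitary A) : ConjInvariant φ (star V * U) := by
  intro X
  rw [star_mul, star_star, ← hU.apply_symm_mul_mul_star hUu X, hV]
  simp only [mul_assoc]

lemma Implements.conjInvariant_conj (hV : Implements φ β V) (hVu : V ∈ unitary A) {M : A}
    (hM : ConjInvariant φ M) : ConjInvariant φ (star V * β M * V) := by
  intro X
  have : star V * β M * V * X * star (star V * β M * V)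
      = star V * β (M * β.symm (V * X * star V) * star M) * V := by
    simp only [map_mul, map_star, StarAlgEquiv.apply_symm_apply, star_mul, star_star, mul_assoc]
  rw [this, hV.apply_star_mul_map_mul, hM, hV.apply_symm_mul_mul_star hVu]

section Cocycle

variable {I : Type*} {α : I → I → A ≃⋆ₐ[R] A} {V : I → I → A}

def implementingCocycle (α : I → I → A ≃⋆ₐ[R] A) (V : I → I → A) (a b c : I) : A :=
  star (V a c) * α a b (V b c) * V a b

lemma implementingCocycle_mem_unitary (hVu : ∀ a b, V a b ∈ unitary A) (a b c : I) :
    implementingCocycle α V a b c ∈ unitary A :=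
  mul_mem (mul_mem (Unitary.star_mem (hVu a c)) (Unitary.map_mem _ (hVu b c))) (hVu a b)

lemma conjInvariant_implementingCocycle (hα : ∀ a b c X, α a b (α b c X) = α a c X)
    (hVu : ∀ a b, V a b ∈ unitary A) (hV : ∀ a b, Implements φ (α a b) (V a b)) (a b c : I) :
    ConjInvariant φ (implementingCocycle α V a b c) := by
  have hαac : (α b c).trans (α a b) = α a c := StarAlgEquiv.ext (hα a b c)
  have hU : Implements φ (α a c) (α a b (V b c) * V a b) := hαac ▸ (hV b c).trans (hV a b)
  rw [implementingCocycle, mul_assoc]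
  exact (hV a c).conjInvariant_star_mul hU
    (mul_mem (Unitary.map_mem _ (hVu b c)) (hVu a b))

lemma implementingCocycle_mul_implementingCocycle (hα : ∀ a b c X, α a b (α b c X) = α a c X)
    (hVu : ∀ a b, V a b ∈ unitary A) (a b c d : I) :
    implementingCocycle α V a c d * implementingCocycle α V a b c =
      implementingCocycle α V a b d *
        (star (V a b) * α a b (implementingCocycle α V b c d) * V a b) := by
  have hcancel : ∀ {U : A}, U ∈ unitary A → ∀ X, U * (star U * X) = X := fun hU X => by
    rw [← mul_assoc, Unitary.mul_star_self_of_mem hU, one_mul]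
  simp only [implementingCocycle, map_mul, map_star, hα, mul_assoc,
    hcancel (hVu _ _), hcancel (Unitary.map_mem (α a b) (hVu b d))]

end Cocycle

end StateImplementation

open StateImplementation
open scoped InnerProductSpace

section VectorState

variable {H : Type*} [NormedAddCommGroup H] [InnerProductSpace ℂ H] {Ω : H}

lemma inner_mul_apply_of_apply_eq_smul (W₁ : H →L[ℂ] H) {W₂ : H →L[ℂ] H} {c : ℂ}
    (h : W₂ Ω = c • Ω) : ⟪Ω, (W₁ * W₂) Ω⟫_ℂ = c * ⟪Ω, W₁ Ω⟫_ℂ := by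
  rw [mul_apply_eq_comp, h, map_smul, inner_smul_right]

variable [CompleteSpace H]

lemma norm_inner_apply_eq_one_of_conjInvariant (hΩ : ‖Ω‖ = 1) {W : H →L[ℂ] H}
    (hW : ConjInvariant (fun X => ⟪Ω, X Ω⟫_ℂ) W) : ‖⟪Ω, W Ω⟫_ℂ‖ = 1 := by
  have key := hW (InnerProductSpace.rankOne ℂ Ω Ω)
  simp only [mul_apply_eq_comp, InnerProductSpace.rankOne_apply, map_smul,
    inner_smul_right, inner_self_eq_one_of_norm_eq_one hΩ, ContinuousLinearMap.star_eq_adjoint,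
    ContinuousLinearMap.adjoint_inner_right, mul_one] at key
  rw [← inner_conj_symm, Complex.conj_mul'] at key
  exact (pow_eq_one_iff_of_nonneg (norm_nonneg _) two_ne_zero).1 (mod_cast key)

lemma apply_eq_inner_smul_of_conjInvariant (hΩ : ‖Ω‖ = 1) {W : H →L[ℂ] H}
    (hWu : W ∈ unitary (H →L[ℂ] H)) (hW : ConjInvariant (fun X => ⟪Ω, X Ω⟫_ℂ) W) :
    W Ω = ⟪Ω, W Ω⟫_ℂ • Ω := by
  have hΩ0 : Ω ≠ 0 := by rintro rfl; simp at hΩ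
  have hWΩ : ‖W Ω‖ = 1 := by rw [ContinuousLinearMap.norm_map_of_mem_unitary hWu, hΩ]
  have hWΩ0 : W Ω ≠ 0 := norm_ne_zero_iff.mp (by rw [hWΩ]; exact one_ne_zero)
  obtain ⟨r, -, hr⟩ := (norm_inner_eq_norm_iff hΩ0 hWΩ0).1 (by
    rw [norm_inner_apply_eq_one_of_conjInvariant hΩ hW, hΩ, hWΩ, one_mul])
  rw [hr, inner_smul_right, inner_self_eq_one_of_norm_eq_one hΩ, mul_one]

end VectorState

/-- Let `ψ(X) = ⟨Ω, X Ω⟩` be the vector state of a unit vector `Ω` in a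
complex Hilbert space, let `α_{ab}` be *-automorphisms of `B(H)` with
`α_{ab} ∘ α_{bc} = α_{ac}` and let `V_{ab}` be unitaries implementing
`ψ ∘ α_{ab}⁻¹ = ψ ∘ Ad_{V_{ab}⁻¹}`.  With `W_{abc} := V_{ac}⁻¹ α_{ab}(V_{bc}) V_{ab}`
and `h_{abc} := ψ(W_{abc})`: (i) `W_{abc}` is a unitary preserving `ψ`;
(ii) `|h_{abc}| = 1`; (iii) `h_{acd} h_{abc} = h_{abd} h_{bcd}`. -/
theorem cech_two_cocycle_from_implementing_unitaries
    {H : Type*} [NormedAddCommGroup H] [InnerProductSpace ℂ H] [CompleteSpace H]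
    {I : Type*} (Ω : H) (hΩ : ‖Ω‖ = 1)
    (ψ : (H →L[ℂ] H) → ℂ) (hψ : ∀ X, ψ X = inner ℂ Ω (X Ω))
    (α : I → I → ((H →L[ℂ] H) ≃⋆ₐ[ℂ] (H →L[ℂ] H)))
    (hα : ∀ a b c X, α a b (α b c X) = α a c X)
    (V : I → I → (H →L[ℂ] H))
    (hVu : ∀ a b, V a b ∈ unitary (H →L[ℂ] H))
    (hV : ∀ a b X, ψ ((α a b).symm X) = ψ (star (V a b) * X * V a b)) :
    ∀ a b c d : I,
      (star (V a c) * α a b (V b c) * V a b) ∈ unitary (H →L[ℂ] H) ∧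
      (∀ X, ψ ((star (V a c) * α a b (V b c) * V a b) * X *
          star (star (V a c) * α a b (V b c) * V a b)) = ψ X) ∧
      ‖ψ (star (V a c) * α a b (V b c) * V a b)‖ = 1 ∧
      ψ (star (V a d) * α a c (V c d) * V a c) * ψ (star (V a c) * α a b (V b c) * V a b)
        = ψ (star (V a d) * α a b (V b d) * V a b) *
          ψ (star (V b d) * α b c (V c d) * V b c) := by
  obtain rfl : ψ = fun X => ⟪Ω, X Ω⟫_ℂ := funext hψ
  have hVimpl : ∀ a b, Implements (fun X => ⟪Ω, X Ω⟫_ℂ) (α a b) (V a b) := hV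
  beta_reduce
  have hWu := implementingCocycle_mem_unitary (α := α) hVu
  have hWinv := conjInvariant_implementingCocycle hα hVu hVimpl
  intro a b c d
  refine ⟨hWu a b c, hWinv a b c, norm_inner_apply_eq_one_of_conjInvariant hΩ (hWinv a b c), ?_⟩
  set U := star (V a b) * α a b (implementingCocycle α V b c d) * V a b
  have hUu : U ∈ unitary (H →L[ℂ] H) :=
    mul_mem (mul_mem (Unitary.star_mem (hVu a b)) (Unitary.map_mem _ (hWu b c d))) (hVu a b)
  have hUinv : ConjInvariant _ U := (hVimpl a b).conjInvariant_conj (hVu a b) (hWinv b c d)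
  calc _ = ⟪Ω, (implementingCocycle α V a c d * implementingCocycle α V a b c) Ω⟫_ℂ := by
        rw [inner_mul_apply_of_apply_eq_smul _
          (apply_eq_inner_smul_of_conjInvariant hΩ (hWu a b c) (hWinv a b c)), mul_comm]
        rfl
    _ = ⟪Ω, (implementingCocycle α V a b d * U) Ω⟫_ℂ := by
        rw [implementingCocycle_mul_implementingCocycle hα hVu]
    _ = _ := by
        rw [inner_mul_apply_of_apply_eq_smul _ (apply_eq_inner_smul_of_conjInvariant hΩ hUu hUinv),
          (hVimpl a b).apply_star_mul_map_mul, mul_comm]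
        rfl
end

section
/- Let H be a complex Hilbert space, Ω ∈ H a unit vector, and ψ the vector state on B(H) given by ψ(X) = ⟨Ω, X Ω⟩. Let I be an index set, for each ordered pair (a,b) ∈ I × I let α_{ab} be a *-algebra automorphism of B(H) with α_{ab} ∘ α_{bc} = α_{ac} for all a, b, c ∈ I, and let V_{ab} and U_{ab} both be unitary operators satisfying ψ(α_{ab}⁻¹(X)) = ψ(V_{ab}⁻¹ X V_{ab}) = ψ(U_{ab}⁻¹ X U_{ab}) for all X ∈ B(H). Set g_{ab} := ψ(V_{ab}⁻¹ U_{ab}). Then |g_{ab}| = 1, and for all a, b, c ∈ I one has ψ(U_{ac}⁻¹ α_{ab}(U_{bc}) U_{ab}) = g_{ab} · conj(g_{ac}) · g_{bc} · ψ(V_{ac}⁻¹ α_{ab}(V_{bc}) V_{ab}); that is, the two 2-cocycles built from the families U and V differ by the coboundary of g. -/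
/-!
Two unit vectors `u`, `v` defining the same vector state on `B(H)` differ by a phase: testing
the states on the projection onto `v` gives `|⟨v, u⟩| = 1`, and the equality case of
Cauchy–Schwarz then gives `u = ⟨v, u⟩ v`. The vectors `U_{ab}Ω` and `V_{ab}Ω` both define
`ψ ∘ α_{ab}⁻¹`, so `U_{ab}Ω = g_{ab} V_{ab}Ω`; likewise `α_{ab}(U_{bc})V_{ab}Ω` and
`α_{ab}(V_{bc})V_{ab}Ω` both define `ψ ∘ α_{bc}⁻¹ ∘ α_{ab}⁻¹`, with phase `g_{bc}`.
Substituting these relations into `⟨U_{ac}Ω, α_{ab}(U_{bc})U_{ab}Ω⟩` yields the coboundary.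
-/

open scoped InnerProductSpace

section VectorState

variable {H : Type*} [NormedAddCommGroup H] [InnerProductSpace ℂ H]

theorem eq_inner_smul_of_forall_inner_apply_eq {u v : H} (hv : ‖v‖ = 1)
    (h : ∀ X : H →L[ℂ] H, ⟪u, X u⟫_ℂ = ⟪v, X v⟫_ℂ) :
    ‖⟪v, u⟫_ℂ‖ = 1 ∧ u = ⟪v, u⟫_ℂ • v := by
  have hvv : ⟪v, v⟫_ℂ = 1 := by simp [inner_self_eq_norm_sq_to_K, hv]
  have hu : ‖u‖ = 1 := by
    rw [norm_eq_sqrt_re_inner (𝕜 := ℂ), ← hv, norm_eq_sqrt_re_inner (𝕜 := ℂ)]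
    simpa using congrArg (fun z : ℂ => √z.re) (h 1)
  have hsq : (‖⟪v, u⟫_ℂ‖ ^ 2 : ℂ) = 1 := by
    have := h (InnerProductSpace.rankOne ℂ v v)
    rwa [InnerProductSpace.rankOne_apply, InnerProductSpace.rankOne_apply, inner_smul_right,
      inner_smul_right, hvv, mul_one, ← inner_conj_symm u v, RCLike.mul_conj] at this
  have hnorm : ‖⟪v, u⟫_ℂ‖ = 1 :=
    (pow_eq_one_iff_of_nonneg (norm_nonneg _) two_ne_zero).mp (by exact_mod_cast hsq)
  refine ⟨hnorm, ?_⟩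
  have hv0 : v ≠ 0 := norm_ne_zero_iff.mp (by rw [hv]; exact one_ne_zero)
  have h_cs := ((norm_inner_eq_norm_tfae ℂ v u).out 0 1).mp (by rw [hnorm, hu, hv, one_mul])
  rwa [hvv, div_one, or_iff_right hv0] at h_cs

theorem inner_star_mul_apply [CompleteSpace H] (A B : H →L[ℂ] H) (x : H) :
    ⟪x, (star A * B) x⟫_ℂ = ⟪A x, B x⟫_ℂ := by
  rw [mul_apply_eq_comp, ContinuousLinearMap.star_eq_adjoint,
    ContinuousLinearMap.adjoint_inner_right]

theorem norm_eq_one_and_apply_eq_smul_of_implements [CompleteSpace H] {Ω : H}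
    {ψ : (H →L[ℂ] H) → ℂ} (hψ : ∀ X, ψ X = ⟪Ω, X Ω⟫_ℂ) {φ : (H →L[ℂ] H) → ℂ} (hφ : φ 1 = 1)
    {W₁ W₂ : H →L[ℂ] H} (h₁ : ∀ X, φ X = ψ (star W₁ * X * W₁))
    (h₂ : ∀ X, φ X = ψ (star W₂ * X * W₂)) :
    ‖ψ (star W₁ * W₂)‖ = 1 ∧ W₂ Ω = ψ (star W₁ * W₂) • W₁ Ω := by
  have h_state (W X : H →L[ℂ] H) : ψ (star W * X * W) = ⟪W Ω, X (W Ω)⟫_ℂ := by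
    rw [hψ, mul_assoc, inner_star_mul_apply, mul_apply_eq_comp]
  have hW₁ : ‖W₁ Ω‖ = 1 := by
    have h := h₁ 1
    rw [hφ, h_state, one_apply_eq_self] at h
    refine (pow_eq_one_iff_of_nonneg (norm_nonneg _) two_ne_zero).mp ?_
    rw [norm_sq_eq_re_inner (𝕜 := ℂ), ← h, RCLike.one_re]
  rw [hψ, inner_star_mul_apply]
  exact eq_inner_smul_of_forall_inner_apply_eq hW₁ fun X => by
    rw [← h_state, ← h_state, ← h₁, ← h₂]

end VectorState

section Implementers

variable {R A B : Type*} [CommSemiring R] [Semiring A] [StarRing A] [Algebra R A]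

theorem map_symm_eq_star_mul_mul_of_implements (ψ : A → B) (β : A ≃⋆ₐ[R] A) {V W : A}
    {φ : A → B} (hV : ∀ X, ψ (β.symm X) = ψ (star V * X * V))
    (hW : ∀ X, φ X = ψ (star W * X * W)) (X : A) :
    φ (β.symm X) = ψ (star (β W * V) * X * (β W * V)) := by
  have : star W * β.symm X * W = β.symm (star (β W) * X * β W) := by
    simp only [map_mul, map_star, StarAlgEquiv.symm_apply_apply]
  rw [hW, this, hV, star_mul]
  simp only [mul_assoc]

theorem map_star_mul_eq_of_implements (ψ : A → B) (β : A ≃⋆ₐ[R] A) {V : A}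
    (hV : ∀ X, ψ (β.symm X) = ψ (star V * X * V)) (W₁ W₂ : A) :
    ψ (star (β W₁ * V) * (β W₂ * V)) = ψ (star W₁ * W₂) := by
  have := hV (β (star W₁ * W₂))
  rw [StarAlgEquiv.symm_apply_apply] at this
  rw [this, star_mul, map_mul, map_star]
  simp only [mul_assoc]

end Implementers

theorem cech_two_cocycle_coboundary_independence_general
    {H : Type*} [NormedAddCommGroup H] [InnerProductSpace ℂ H] [CompleteSpace H]
    {I : Type*} (Ω : H) (hΩ : ‖Ω‖ = 1)
    (ψ : (H →L[ℂ] H) → ℂ) (hψ : ∀ X, ψ X = inner ℂ Ω (X Ω))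
    (α : I → I → ((H →L[ℂ] H) ≃⋆ₐ[ℂ] (H →L[ℂ] H)))
    (V U : I → I → (H →L[ℂ] H))
    (hV : ∀ a b X, ψ ((α a b).symm X) = ψ (star (V a b) * X * V a b))
    (hU : ∀ a b X, ψ ((α a b).symm X) = ψ (star (U a b) * X * U a b)) :
    ∀ a b c : I,
      ‖ψ (star (V a b) * U a b)‖ = 1 ∧
      ψ (star (U a c) * α a b (U b c) * U a b) =
        ψ (star (V a b) * U a b) * (starRingEnd ℂ) (ψ (star (V a c) * U a c)) *
          ψ (star (V b c) * U b c) * ψ (star (V a c) * α a b (V b c) * V a b) := by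
  have hψ1 : ψ 1 = 1 := by
    rw [hψ, one_apply_eq_self, inner_self_eq_norm_sq_to_K, hΩ]; norm_num
  have phase (a b : I) := norm_eq_one_and_apply_eq_smul_of_implements hψ
    (by rwa [map_one]) (hV a b) (hU a b)
  intro a b c
  refine ⟨(phase a b).1, ?_⟩
  have h_bc : (α a b (U b c) * V a b) Ω =
      ψ (star (V b c) * U b c) • (α a b (V b c) * V a b) Ω := by
    have := (norm_eq_one_and_apply_eq_smul_of_implements hψ (by rwa [map_one, map_one])
      (map_symm_eq_star_mul_mul_of_implements ψ (α a b) (hV a b) (hV b c))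
      (map_symm_eq_star_mul_mul_of_implements ψ (α a b) (hV a b) (hU b c))).2
    rwa [map_star_mul_eq_of_implements ψ (α a b) (hV a b)] at this
  calc ψ (star (U a c) * α a b (U b c) * U a b)
      = ⟪U a c Ω, α a b (U b c) (U a b Ω)⟫_ℂ := by
        rw [hψ, mul_assoc, inner_star_mul_apply, mul_apply_eq_comp]
    _ = ⟪ψ (star (V a c) * U a c) • V a c Ω, ψ (star (V a b) * U a b) •
          ψ (star (V b c) * U b c) • (α a b (V b c) * V a b) Ω⟫_ℂ := by
        rw [(phase a c).2, (phase a b).2, map_smul, ← mul_apply_eq_comp, h_bc]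
    _ = _ := by
        rw [inner_smul_left, inner_smul_right, inner_smul_right, hψ (_ * _ * V a b),
          mul_assoc (star (V a c)), inner_star_mul_apply]
        ring

/-- With `ψ` the vector state of a unit vector `Ω`, automorphisms
`α_{ab}` of `B(H)` satisfying `α_{ab} ∘ α_{bc} = α_{ac}`, and two families `V_{ab}`,
`U_{ab}` of unitaries both implementing `ψ ∘ α_{ab}⁻¹`, set `g_{ab} := ψ(V_{ab}⁻¹ U_{ab})`.
Then `|g_{ab}| = 1` and
`ψ(U_{ac}⁻¹ α_{ab}(U_{bc}) U_{ab}) = g_{ab} ⋅ conj(g_{ac}) ⋅ g_{bc} ⋅ ψ(V_{ac}⁻¹ α_{ab}(V_{bc}) V_{ab})`,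
i.e. the two 2-cocycles differ by the coboundary of `g`. -/
theorem cech_two_cocycle_coboundary_independence
    {H : Type*} [NormedAddCommGroup H] [InnerProductSpace ℂ H] [CompleteSpace H]
    {I : Type*} (Ω : H) (hΩ : ‖Ω‖ = 1)
    (ψ : (H →L[ℂ] H) → ℂ) (hψ : ∀ X, ψ X = inner ℂ Ω (X Ω))
    (α : I → I → ((H →L[ℂ] H) ≃⋆ₐ[ℂ] (H →L[ℂ] H)))
    (hα : ∀ a b c X, α a b (α b c X) = α a c X)
    (V U : I → I → (H →L[ℂ] H))
    (hVu : ∀ a b, V a b ∈ unitary (H →L[ℂ] H))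
    (hUu : ∀ a b, U a b ∈ unitary (H →L[ℂ] H))
    (hV : ∀ a b X, ψ ((α a b).symm X) = ψ (star (V a b) * X * V a b))
    (hU : ∀ a b X, ψ ((α a b).symm X) = ψ (star (U a b) * X * U a b)) :
    ∀ a b c : I,
      ‖ψ (star (V a b) * U a b)‖ = 1 ∧
      ψ (star (U a c) * α a b (U b c) * U a b) =
        ψ (star (V a b) * U a b) * (starRingEnd ℂ) (ψ (star (V a c) * U a c)) *
          ψ (star (V b c) * U b c) * ψ (star (V a c) * α a b (V b c) * V a b) :=
  cech_two_cocycle_coboundary_independence_general Ω hΩ ψ hψ α V U hV hU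
end

section
/- Fix d ≥ 1 and a positive integer α. There is a constant C > 0, depending only on d and α, with the following property: for every Banach space V, every family (F_X) of elements of V indexed by the bricks X of ℤ^d, and all distinct points j, k ∈ ℤ^d, if there are constants C_j, C_k ≥ 0 such that ‖F_X‖ · (1 + diam(X ∪ {j}))^{α+2d+1} ≤ C_j and ‖F_X‖ · (1 + diam(X ∪ {k}))^{α+2d+1} ≤ C_k for every brick X, then the family (F_X) is absolutely summable and ‖∑_X F_X‖ ≤ C · (C_j + C_k) · (1 + d(j,k))^{−α}. -/
/-- A brick in `ℤ^d`: a nonempty product of finite integer intervals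
`∏_{i=1}^d ([a_i, b_i] ∩ ℤ)` with `a_i ≤ b_i`. -/
def IsBrick (d : ℕ) (X : Set (Fin d → ℤ)) : Prop :=
  ∃ a b : Fin d → ℤ, (∀ i, a i ≤ b i) ∧ X = {x | ∀ i, a i ≤ x i ∧ x i ≤ b i}

universe u

/-!
A brick `X = [a, b]` is determined by its corner pair `(a, b) ∈ ℤ^d × ℤ^d`, and for every point
`p` the sup distance from `(a, b)` to `(p, p)` is at most `D_p = diam (X ∪ {p})`. Since
`dist j k ≤ D_j + D_k`, one of `D_j, D_k` is at least `dist j k / 2`; spending `α` powers of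
the decay at that point on `(1 + dist j k)^α` leaves
`‖F_X‖ ≤ 2^α (1 + dist j k)^{-α} (C_j w_j(a, b) + C_k w_k(a, b))` with
`w_p(q) = (1 + dist q (p, p))^{-(2d+1)}`. The weights `w_p` are translates of
`(1 + ‖q‖)^{-(2d+1)}`, which is summable on `ℤ^{2d}` because `2d + 1 > 2d`.
-/

open Metric Bornology

lemma summable_one_add_abs_intCast_rpow_neg {s : ℝ} (hs : 1 < s) :
    Summable fun n : ℤ => (1 + |(n : ℝ)|) ^ (-s) := by
  refine (Real.summable_abs_int_rpow hs).of_norm_bounded_eventually ?_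
  filter_upwards [Filter.eventually_cofinite_ne 0] with n hn
  have hpos : (0 : ℝ) < |(n : ℝ)| := abs_pos.2 (Int.cast_ne_zero.2 hn)
  rw [Real.norm_of_nonneg (by positivity)]
  exact Real.rpow_le_rpow_of_nonpos hpos (by linarith) (by linarith)

section IntegerLattice

variable {ι : Type*} [Fintype ι]

lemma summable_pi_prod_of_nonneg {κ : Type*} {g : ι → κ → ℝ}
    (hg0 : ∀ i x, 0 ≤ g i x) (hg : ∀ i, Summable (g i)) :
    Summable fun z : ι → κ => ∏ i, g i (z i) := by
  classical
  refine summable_of_sum_le (c := ∏ i, ∑' x, g i x)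
    (fun z => Finset.prod_nonneg fun i _ => hg0 i (z i)) fun u => ?_
  calc ∑ z ∈ u, ∏ i, g i (z i)
      ≤ ∑ z ∈ Fintype.piFinset fun i => u.image (· i), ∏ i, g i (z i) :=
        Finset.sum_le_sum_of_subset_of_nonneg
          (fun z hz => Fintype.mem_piFinset.2 fun i => Finset.mem_image_of_mem _ hz)
          (fun z _ _ => Finset.prod_nonneg fun i _ => hg0 i (z i))
    _ = ∏ i, ∑ x ∈ u.image (· i), g i x := (Finset.prod_univ_sum _ _).symm
    _ ≤ ∏ i, ∑' x, g i x :=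
        Finset.prod_le_prod (fun i _ => Finset.sum_nonneg fun x _ => hg0 i x)
          fun i _ => (hg i).sum_le_tsum _ fun x _ => hg0 i x

lemma summable_one_add_norm_intPi_rpow_neg {r : ℝ}
    (hr : Fintype.card ι < r) : Summable fun z : ι → ℤ => (1 + ‖z‖) ^ (-r) := by
  rcases isEmpty_or_nonempty ι with hι | hι
  · exact Summable.of_finite
  have hn : (0 : ℝ) < Fintype.card ι := by exact_mod_cast Fintype.card_pos
  set s := r / Fintype.card ι
  have hs : 1 < s := (one_lt_div hn).2 hr
  refine (summable_pi_prod_of_nonneg (fun _ _ => by positivity)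
      fun _ => summable_one_add_abs_intCast_rpow_neg hs).of_nonneg_of_le
    (fun _ => by positivity) fun z => ?_
  calc (1 + ‖z‖) ^ (-r) = ∏ _i : ι, (1 + ‖z‖) ^ (-s) := by
        rw [Finset.prod_const, Finset.card_univ, ← Real.rpow_natCast,
          ← Real.rpow_mul (by positivity)]
        congr 1
        simp only [s]
        field_simp
    _ ≤ ∏ i, (1 + |(z i : ℝ)|) ^ (-s) := by
        refine Finset.prod_le_prod (fun _ _ => by positivity) fun i _ => ?_
        have hzi : |(z i : ℝ)| ≤ ‖z‖ := by
          simpa [Int.norm_eq_abs] using norm_le_pi_norm z i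
        exact Real.rpow_le_rpow_of_nonpos (by positivity) (by linarith) (by linarith)

lemma summable_inv_one_add_norm_intPi_prod_pow {m : ℕ}
    (hm : 2 * Fintype.card ι < m) :
    Summable fun q : (ι → ℤ) × (ι → ℤ) => ((1 + ‖q‖) ^ m)⁻¹ := by
  set r : ℝ := m / 2
  have hr : (Fintype.card ι : ℝ) < r := by
    rw [lt_div_iff₀ two_pos]
    exact_mod_cast (by omega : Fintype.card ι * 2 < m)
  have h := summable_one_add_norm_intPi_rpow_neg hr
  refine (h.mul_of_nonneg h (fun _ => by positivity) fun _ => by positivity).of_nonneg_of_le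
    (fun _ => by positivity) fun q => ?_
  calc ((1 + ‖q‖) ^ m)⁻¹ = (1 + ‖q‖) ^ (-r) * (1 + ‖q‖) ^ (-r) := by
        rw [← Real.rpow_add (by positivity), ← Real.rpow_natCast, ← Real.rpow_neg (by positivity)]
        simp only [r]
        ring_nf
    _ ≤ (1 + ‖q.1‖) ^ (-r) * (1 + ‖q.2‖) ^ (-r) := by
        have hr0 : -r ≤ 0 := by linarith [show (0:ℝ) ≤ r by positivity]
        gcongr ?_ * ?_
        · exact Real.rpow_le_rpow_of_nonpos (by positivity) (by linarith [norm_fst_le q]) hr0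
        · exact Real.rpow_le_rpow_of_nonpos (by positivity) (by linarith [norm_snd_le q]) hr0

end IntegerLattice

lemma hasSum_comp_dist_iff {G : Type*} [SeminormedAddCommGroup G] (φ : ℝ → ℝ) (p : G) {a : ℝ} :
    HasSum (fun q => φ (dist q p)) a ↔ HasSum (fun q : G => φ ‖q‖) a := by
  rw [← (Equiv.addRight p).hasSum_iff]
  simp [Function.comp_def, dist_eq_norm]

lemma summable_norm_and_norm_tsum_le_of_le_comp_injective {β γ E : Type*}
    [SeminormedAddCommGroup E] {f : β → E} {c : β → γ} (hc : Function.Injective c)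
    {g : γ → ℝ} (hg0 : ∀ x, 0 ≤ g x) (hg : Summable g) (hfg : ∀ b, ‖f b‖ ≤ g (c b)) :
    Summable (fun b => ‖f b‖) ∧ ‖∑' b, f b‖ ≤ ∑' x, g x :=
  have hgc : Summable (g ∘ c) := hg.comp_injective hc
  ⟨hgc.of_nonneg_of_le (fun _ => norm_nonneg _) hfg,
    (tsum_of_norm_bounded hgc.hasSum hfg).trans (tsum_comp_le_tsum_of_inj hg hg0 hc)⟩

lemma mul_one_add_pow_le_of_le_two_mul {x t D e C : ℝ} {α m : ℕ} (hx : 0 ≤ x) (ht : 0 ≤ t)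
    (he : 0 ≤ e) (htD : t ≤ 2 * D) (heD : e ≤ D) (h : x * (1 + D) ^ (α + m) ≤ C) :
    x * (1 + t) ^ α ≤ 2 ^ α * (C * ((1 + e) ^ m)⁻¹) := by
  rw [← div_eq_mul_inv, mul_div_assoc', le_div_iff₀ (by positivity)]
  calc x * (1 + t) ^ α * (1 + e) ^ m ≤ x * (2 * (1 + D)) ^ α * (1 + D) ^ m := by
        have : 0 ≤ D := he.trans heD
        gcongr; linarith
    _ = 2 ^ α * (x * (1 + D) ^ (α + m)) := by rw [mul_pow, pow_add]; ring
    _ ≤ 2 ^ α * C := by gcongr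

lemma mul_one_add_pow_le_of_two_point {x t Dj Dk ej ek Cj Ck : ℝ} {α m : ℕ} (hx : 0 ≤ x)
    (ht : 0 ≤ t) (hej : 0 ≤ ej) (hek : 0 ≤ ek) (htD : t ≤ Dj + Dk) (hejD : ej ≤ Dj)
    (hekD : ek ≤ Dk) (hj : x * (1 + Dj) ^ (α + m) ≤ Cj) (hk : x * (1 + Dk) ^ (α + m) ≤ Ck) :
    x * (1 + t) ^ α ≤ 2 ^ α * (Cj * ((1 + ej) ^ m)⁻¹ + Ck * ((1 + ek) ^ m)⁻¹) := by
  have hCj : 0 ≤ Cj := le_trans (by have : 0 ≤ Dj := hej.trans hejD; positivity) hj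
  have hCk : 0 ≤ Ck := le_trans (by have : 0 ≤ Dk := hek.trans hekD; positivity) hk
  rcases le_total Dk Dj with hD | hD
  · calc x * (1 + t) ^ α ≤ 2 ^ α * (Cj * ((1 + ej) ^ m)⁻¹) :=
          mul_one_add_pow_le_of_le_two_mul hx ht hej (by linarith) hejD hj
      _ ≤ _ := by gcongr; exact le_add_of_nonneg_right (by positivity)
  · calc x * (1 + t) ^ α ≤ 2 ^ α * (Ck * ((1 + ek) ^ m)⁻¹) :=
          mul_one_add_pow_le_of_le_two_mul hx ht hek (by linarith) hekD hk
      _ ≤ _ := by gcongr; exact le_add_of_nonneg_left (by positivity)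

section TwoPointDecay

variable {E : Type*} [PseudoMetricSpace E] {s : Set E}

lemma dist_le_diam_union_singleton (hs : IsBounded s) {a : E} (ha : a ∈ s) (p : E) :
    dist a p ≤ diam (s ∪ {p}) :=
  dist_le_diam_of_mem (hs.union isBounded_singleton) (Or.inl ha) (Or.inr rfl)

lemma dist_prod_diag_le_diam_union_singleton (hs : IsBounded s) {a b : E} (ha : a ∈ s)
    (hb : b ∈ s) (p : E) : dist (a, b) (p, p) ≤ diam (s ∪ {p}) := by
  rw [Prod.dist_eq]
  exact max_le (dist_le_diam_union_singleton hs ha p) (dist_le_diam_union_singleton hs hb p)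

lemma le_div_one_add_dist_pow_of_two_point_decay (hs : IsBounded s) {a b : E} (ha : a ∈ s)
    (hb : b ∈ s) {j k : E} {x Cj Ck : ℝ} {α m : ℕ} (hx : 0 ≤ x)
    (hj : x * (1 + diam (s ∪ {j})) ^ (α + m) ≤ Cj)
    (hk : x * (1 + diam (s ∪ {k})) ^ (α + m) ≤ Ck) :
    x ≤ 2 ^ α / (1 + dist j k) ^ α *
      (Cj * ((1 + dist (a, b) (j, j)) ^ m)⁻¹ + Ck * ((1 + dist (a, b) (k, k)) ^ m)⁻¹) := by
  have hjk : dist j k ≤ diam (s ∪ {j}) + diam (s ∪ {k}) :=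
    calc dist j k ≤ dist a j + dist a k := dist_triangle_left j k a
      _ ≤ _ := add_le_add (dist_le_diam_union_singleton hs ha j)
          (dist_le_diam_union_singleton hs ha k)
  rw [div_mul_eq_mul_div, le_div_iff₀ (by positivity)]
  exact mul_one_add_pow_le_of_two_point hx dist_nonneg dist_nonneg dist_nonneg hjk
    (dist_prod_diag_le_diam_union_singleton hs ha hb j)
    (dist_prod_diag_le_diam_union_singleton hs ha hb k) hj hk

end TwoPointDecay

lemma isBrick_iff_exists_Icc {d : ℕ} {X : Set (Fin d → ℤ)} :
    IsBrick d X ↔ ∃ a b, a ≤ b ∧ X = Set.Icc a b := by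
  simp [IsBrick, Pi.le_def, Set.Icc, forall_and]

lemma IsBrick.isBounded {d : ℕ} {X : Set (Fin d → ℤ)} (hX : IsBrick d X) : IsBounded X := by
  obtain ⟨a, b, -, rfl⟩ := isBrick_iff_exists_Icc.1 hX
  exact (Set.finite_Icc a b).isBounded

lemma exists_injective_brick_corners (d : ℕ) :
    ∃ c : {X : Set (Fin d → ℤ) // IsBrick d X} → (Fin d → ℤ) × (Fin d → ℤ),
      Function.Injective c ∧ ∀ X, (c X).1 ∈ X.1 ∧ (c X).2 ∈ X.1 := by
  choose a b hab hX using fun X : {X // IsBrick d X} => isBrick_iff_exists_Icc.1 X.2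
  refine ⟨fun X => (a X, b X), fun X Y h => Subtype.ext ?_, fun X => ?_⟩
  · obtain ⟨ha, hb⟩ := Prod.ext_iff.1 h
    rw [hX X, hX Y, show a X = a Y from ha, show b X = b Y from hb]
  · rw [hX X]
    exact ⟨Set.left_mem_Icc.2 (hab X), Set.right_mem_Icc.2 (hab X)⟩

theorem brick_sum_bound_from_two_point_decay_general (d α : ℕ) :
    ∃ C : ℝ, 0 < C ∧
      ∀ (V : Type u) [NormedAddCommGroup V] [NormedSpace ℝ V] [CompleteSpace V],
        ∀ (F : {X : Set (Fin d → ℤ) // IsBrick d X} → V) (j k : Fin d → ℤ), j ≠ k →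
          ∀ Cj Ck : ℝ, 0 ≤ Cj → 0 ≤ Ck →
            (∀ X : {X : Set (Fin d → ℤ) // IsBrick d X},
              ‖F X‖ * (1 + Metric.diam (X.1 ∪ {j})) ^ (α + 2 * d + 1) ≤ Cj) →
            (∀ X : {X : Set (Fin d → ℤ) // IsBrick d X},
              ‖F X‖ * (1 + Metric.diam (X.1 ∪ {k})) ^ (α + 2 * d + 1) ≤ Ck) →
            Summable (fun X => ‖F X‖) ∧
              ‖∑' X, F X‖ ≤ C * (Cj + Ck) / (1 + dist j k) ^ α := by
  obtain ⟨c, hc, hcX⟩ := exists_injective_brick_corners d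
  set w : (Fin d → ℤ) × (Fin d → ℤ) → ℝ := fun q => ((1 + ‖q‖) ^ (2 * d + 1))⁻¹
  have hw : Summable w := summable_inv_one_add_norm_intPi_prod_pow (by simp)
  refine ⟨2 ^ α * ∑' q, w q,
    mul_pos (by positivity) (hw.tsum_pos (fun _ => by positivity) 0 (by simp [w])), ?_⟩
  intro V _ _ _ F j k _ Cj Ck hCj hCk hj hk
  have hwp (p : Fin d → ℤ) :
      HasSum (fun q => ((1 + dist q (p, p)) ^ (2 * d + 1))⁻¹) (∑' q, w q) :=
    (hasSum_comp_dist_iff (fun t => ((1 + t) ^ (2 * d + 1))⁻¹) (p, p)).2 hw.hasSum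
  have hg := (((hwp j).mul_left Cj).add ((hwp k).mul_left Ck)).mul_left
    (2 ^ α / (1 + dist j k) ^ α)
  obtain ⟨hsum, hle⟩ := summable_norm_and_norm_tsum_le_of_le_comp_injective hc
    (fun _ => by positivity) hg.summable fun X =>
      le_div_one_add_dist_pow_of_two_point_decay X.2.isBounded (hcX X).1 (hcX X).2
        (norm_nonneg _) (hj X) (hk X)
  refine ⟨hsum, hle.trans_eq ?_⟩
  rw [hg.tsum_eq]
  ring

/-- Fix `d ≥ 1` and a positive integer `α`.  There is a constant
`C > 0` depending only on `d` and `α` such that: for every Banach space `V`, every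
family `(F_X)` in `V` indexed by the bricks of `ℤ^d` (with its sup metric), and all
distinct `j, k ∈ ℤ^d`, if `‖F_X‖ (1 + diam(X ∪ {j}))^{α+2d+1} ≤ C_j` and
`‖F_X‖ (1 + diam(X ∪ {k}))^{α+2d+1} ≤ C_k` for all bricks `X`, then `(F_X)` is
absolutely summable and `‖∑_X F_X‖ ≤ C (C_j + C_k) (1 + d(j,k))^{-α}`. -/
theorem brick_sum_bound_from_two_point_decay (d α : ℕ) (hd : 1 ≤ d) (hα : 1 ≤ α) :
    ∃ C : ℝ, 0 < C ∧
      ∀ (V : Type u) [NormedAddCommGroup V] [NormedSpace ℝ V] [CompleteSpace V],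
        ∀ (F : {X : Set (Fin d → ℤ) // IsBrick d X} → V) (j k : Fin d → ℤ), j ≠ k →
          ∀ Cj Ck : ℝ, 0 ≤ Cj → 0 ≤ Ck →
            (∀ X : {X : Set (Fin d → ℤ) // IsBrick d X},
              ‖F X‖ * (1 + Metric.diam (X.1 ∪ {j})) ^ (α + 2 * d + 1) ≤ Cj) →
            (∀ X : {X : Set (Fin d → ℤ) // IsBrick d X},
              ‖F X‖ * (1 + Metric.diam (X.1 ∪ {k})) ^ (α + 2 * d + 1) ≤ Ck) →
            Summable (fun X => ‖F X‖) ∧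
              ‖∑' X, F X‖ ≤ C * (Cj + Ck) / (1 + dist j k) ^ α :=
  brick_sum_bound_from_two_point_decay_general d α
end

section
/- Fix d ≥ 1 and let j ∈ ℤ^d. For every real α > 2d + 1, the family ((1 + diam(X ∪ {j}))^{−α})_X, indexed by all bricks X of ℤ^d, is summable, i.e. ∑_X (1 + diam(X ∪ {j}))^{−α} < ∞. -/
open Real

lemma aux_sum_nat {q : ℝ} (hq : 1 < q) :
    Summable (fun n : ℕ => (1 + (n : ℝ)) ^ (-q)) := by
  have h : Summable (fun n : ℕ => (n : ℝ) ^ (-q)) :=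
    Real.summable_nat_rpow.2 (by linarith)
  have h2 := h.comp_injective (add_left_injective 1)
  refine h2.congr fun n => ?_
  simp only [Function.comp]
  push_cast
  ring_nf

lemma aux_sum_int {q : ℝ} (hq : 1 < q) :
    Summable (fun n : ℤ => (1 + |(n : ℝ)|) ^ (-q)) := by
  apply Summable.of_nat_of_neg <;>
  · refine (aux_sum_nat hq).congr fun n => ?_
    push_cast
    simp [abs_of_nonneg, Nat.cast_nonneg]

lemma aux_sum_pi {n : ℕ} {w : ℤ → ℝ} (hw : Summable w) (h0 : ∀ k, 0 ≤ w k) :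
    Summable (fun a : Fin n → ℤ => ∏ i, w (a i)) := by
  induction n with
  | zero => exact Summable.of_finite
  | succ n ih =>
    have h := hw.mul_of_nonneg ih h0
      (fun a => Finset.prod_nonneg fun i _ => h0 _)
    rw [← (Fin.consEquiv (fun _ : Fin (n+1) => ℤ)).summable_iff]
    refine h.congr fun p => ?_
    simp [Fin.consEquiv, Fin.prod_univ_succ]

lemma aux_bound {d : ℕ} (hd : 1 ≤ d) (x y : Fin d → ℤ) {β : ℝ} (hβ : 0 ≤ β) :
    (1 + dist x y) ^ (-β) ≤ ∏ i, (1 + dist (x i) (y i)) ^ (-(β / d)) := by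
  have hd0 : (0:ℝ) < d := by exact_mod_cast hd
  have hA : (0:ℝ) < 1 + dist x y := by positivity
  have hfac : ∀ i, (0:ℝ) < 1 + dist (x i) (y i) := fun i => by positivity
  have hprodpos : (0:ℝ) < ∏ i, (1 + dist (x i) (y i)) :=
    Finset.prod_pos fun i _ => hfac i
  have hle : ∏ i, (1 + dist (x i) (y i)) ≤ (1 + dist x y) ^ d := by
    calc ∏ i, (1 + dist (x i) (y i)) ≤ ∏ _i : Fin d, (1 + dist x y) :=
          Finset.prod_le_prod (fun i _ => (hfac i).le)
            (fun i _ => by have := dist_le_pi_dist x y i; linarith)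
      _ = (1 + dist x y) ^ d := by simp
  have hz : -(β / d) ≤ 0 := neg_nonpos.2 (div_nonneg hβ hd0.le)
  calc (1 + dist x y) ^ (-β)
      = ((1 + dist x y) ^ d) ^ (-(β / d)) := by
        rw [← Real.rpow_natCast (1 + dist x y) d, ← Real.rpow_mul hA.le]
        congr 1
        field_simp
    _ ≤ (∏ i, (1 + dist (x i) (y i))) ^ (-(β / d)) :=
        Real.rpow_le_rpow_of_nonpos hprodpos hle hz
    _ = ∏ i, (1 + dist (x i) (y i)) ^ (-(β / d)) :=
        (Real.finset_prod_rpow _ _ (fun i _ => (hfac i).le) _).symm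

/-- Fix `d ≥ 1` and `j ∈ ℤ^d`.  For every real `α > 2d + 1`, the
family `((1 + diam(X ∪ {j}))^{-α})_X`, indexed by all bricks `X` of `ℤ^d` (with its
sup metric), is summable. -/
theorem summable_inv_poly_diam_over_bricks (d : ℕ) (hd : 1 ≤ d) (j : Fin d → ℤ)
    (α : ℝ) (hα : (2 * d + 1 : ℝ) < α) :
    Summable (fun X : {X : Set (Fin d → ℤ) // IsBrick d X} =>
      (1 + Metric.diam (X.1 ∪ {j})) ^ (-α)) := by
  have hd0 : (0:ℝ) < d := by exact_mod_cast hd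
  have hα0 : (0:ℝ) < α := by nlinarith
  set β : ℝ := α / 2 with hβdef
  have hβ0 : 0 ≤ β := by positivity
  set q : ℝ := β / d with hqdef
  have hq : 1 < q := by
    rw [hqdef, hβdef, lt_div_iff₀ hd0]
    nlinarith
  -- the single-center summable majorant
  set h : (Fin d → ℤ) → ℝ := fun a => ∏ i, (1 + dist (a i) (j i)) ^ (-q) with hhdef
  have hh0 : ∀ a, 0 ≤ h a := fun a =>
    Finset.prod_nonneg fun i _ => Real.rpow_nonneg (by positivity) _
  have hh : Summable h := by
    have hw : Summable fun n : ℤ => (1 + |(n : ℝ)|) ^ (-q) := aux_sum_int hq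
    have h0 : ∀ k : ℤ, 0 ≤ (1 + |(k : ℝ)|) ^ (-q) :=
      fun k => Real.rpow_nonneg (by positivity) _
    have hpi := aux_sum_pi (n := d) hw h0
    have hsub : Function.Injective (fun a : Fin d → ℤ => a - j) :=
      fun a b hab => by simpa using congrArg (· + j) hab
    refine (hpi.comp_injective hsub).congr fun a => ?_
    simp only [Function.comp, hhdef, Pi.sub_apply]
    refine Finset.prod_congr rfl fun i _ => ?_
    congr 1
    rw [Int.dist_eq]
    push_cast
    ring_nf
  -- summable over pairs
  have hg : Summable (fun p : (Fin d → ℤ) × (Fin d → ℤ) => h p.1 * h p.2) :=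
    hh.mul_of_nonneg hh hh0 hh0
  -- the injection from bricks to pairs
  set Φ : {X : Set (Fin d → ℤ) // IsBrick d X} → (Fin d → ℤ) × (Fin d → ℤ) :=
    fun X => (X.2.choose, X.2.choose_spec.choose) with hΦdef
  have hΦspec : ∀ X : {X : Set (Fin d → ℤ) // IsBrick d X},
      (∀ i, (Φ X).1 i ≤ (Φ X).2 i) ∧
        X.1 = {x | ∀ i, (Φ X).1 i ≤ x i ∧ x i ≤ (Φ X).2 i} :=
    fun X => X.2.choose_spec.choose_spec
  have hΦinj : Function.Injective Φ := by
    intro X Y hXY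
    apply Subtype.ext
    rw [(hΦspec X).2, (hΦspec Y).2, hXY]
  refine Summable.of_nonneg_of_le
    (fun X => Real.rpow_nonneg (by positivity) _)
    (fun X => ?_) (hg.comp_injective hΦinj)
  -- pointwise bound
  obtain ⟨hab, hXeq⟩ := hΦspec X
  set a := (Φ X).1
  set b := (Φ X).2
  have haX : a ∈ X.1 := by rw [hXeq]; exact fun i => ⟨le_refl _, hab i⟩
  have hbX : b ∈ X.1 := by rw [hXeq]; exact fun i => ⟨hab i, le_refl _⟩
  have hfin : (X.1 ∪ {j}).Finite := by
    refine Set.Finite.union ?_ (Set.finite_singleton j)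
    rw [hXeq]
    refine (Set.Finite.pi fun i => Set.finite_Icc (a i) (b i)).subset ?_
    intro x hx
    exact fun i _ => Set.mem_Icc.2 (hx i)
  have hbdd : Bornology.IsBounded (X.1 ∪ {j}) := hfin.isBounded
  set D := Metric.diam (X.1 ∪ {j}) with hDdef
  have hD0 : 0 ≤ D := Metric.diam_nonneg
  have hDa : dist a j ≤ D :=
    Metric.dist_le_diam_of_mem hbdd (Or.inl haX) (Or.inr rfl)
  have hDb : dist b j ≤ D :=
    Metric.dist_le_diam_of_mem hbdd (Or.inl hbX) (Or.inr rfl)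
  have hpa : (0:ℝ) < 1 + dist a j := by positivity
  have hpb : (0:ℝ) < 1 + dist b j := by positivity
  have step1 : (1 + D) ^ (-α) ≤ (1 + dist a j) ^ (-β) * (1 + dist b j) ^ (-β) := by
    have h2 : (1 + dist a j) * (1 + dist b j) ≤ (1 + D) ^ (2:ℕ) := by
      rw [sq]
      exact mul_le_mul (by linarith) (by linarith) hpb.le (by linarith)
    calc (1 + D) ^ (-α) = ((1 + D) ^ (2:ℕ)) ^ (-β) := by
          rw [← Real.rpow_natCast (1 + D) 2, ← Real.rpow_mul (by linarith)]
          congr 1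
          rw [hβdef]; ring
      _ ≤ ((1 + dist a j) * (1 + dist b j)) ^ (-β) :=
          Real.rpow_le_rpow_of_nonpos (by positivity) h2 (neg_nonpos.2 hβ0)
      _ = (1 + dist a j) ^ (-β) * (1 + dist b j) ^ (-β) :=
          Real.mul_rpow hpa.le hpb.le
  have step2a : (1 + dist a j) ^ (-β) ≤ h a := aux_bound hd a j hβ0
  have step2b : (1 + dist b j) ^ (-β) ≤ h b := aux_bound hd b j hβ0
  calc (1 + D) ^ (-α) ≤ (1 + dist a j) ^ (-β) * (1 + dist b j) ^ (-β) := step1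
    _ ≤ h a * h b :=
        mul_le_mul step2a step2b (Real.rpow_nonneg hpb.le _) (hh0 a)
    _ = (fun p : (Fin d → ℤ) × (Fin d → ℤ) => h p.1 * h p.2) (Φ X) := rfl
end
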